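/- Let f(u,v) be a real-valued function on a product of two compact convex sets, continuously differentiable, convex in u for each fixed v and convex in v for each fixed u. Then the block coordinate descent iteration u_{k+1} = argmin_u f(u, v_k), v_{k+1} = argmin_v f(u_{k+1}, v), produces a nonincreasing sequence f(u_k, v_k), and every limit point of the iterates is a stationary point of f (i.e., the gradient vanishes there). -/

import Mathlib

open Filter

/-- Block coordinate descent on a continuously differentiable function `f` over a product
of compact convex sets `U × V`, convex in each block separately, produces a nonincreasing
sequence of objective values, and every limit point of the iterates is a stationary
point, i.e. satisfies the first-order conditions
`∇_u f(u*,v*)ᵀ (u - u*) ≥ 0` for all `u ∈ U` and `∇_v f(u*,v*)ᵀ (v - v*) ≥ 0`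
for all `v ∈ V`. -/
theorem stmt_6 (p q : ℕ)
    (U : Set (EuclideanSpace ℝ (Fin p))) (V : Set (EuclideanSpace ℝ (Fin q)))
    (hUc : IsCompact U) (hUconv : Convex ℝ U) (hUne : U.Nonempty)
    (hVc : IsCompact V) (hVconv : Convex ℝ V) (hVne : V.Nonempty)
    (f : EuclideanSpace ℝ (Fin p) × EuclideanSpace ℝ (Fin q) → ℝ)
    (hf : ContDiff ℝ 1 f)
    (hconvU : ∀ v ∈ V, ConvexOn ℝ U (fun u => f (u, v)))
    (hconvV : ∀ u ∈ U, ConvexOn ℝ V (fun v => f (u, v)))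
    (u : ℕ → EuclideanSpace ℝ (Fin p)) (v : ℕ → EuclideanSpace ℝ (Fin q))
    (hu0 : u 0 ∈ U) (hv0 : v 0 ∈ V)
    (huU : ∀ k, u k ∈ U) (hvV : ∀ k, v k ∈ V)
    -- `u (k+1)` is the (unique) minimizer of `f (·, v k)` over `U`
    (hustep : ∀ k, ∀ u' ∈ U, f (u (k + 1), v k) ≤ f (u', v k))
    (huunique : ∀ k, ∀ u' ∈ U, f (u', v k) = f (u (k + 1), v k) → u' = u (k + 1))
    -- `v (k+1)` is the (unique) minimizer of `f (u (k+1), ·)` over `V`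
    (hvstep : ∀ k, ∀ v' ∈ V, f (u (k + 1), v (k + 1)) ≤ f (u (k + 1), v'))
    (hvunique : ∀ k, ∀ v' ∈ V,
      f (u (k + 1), v') = f (u (k + 1), v (k + 1)) → v' = v (k + 1)) :
    (∀ k, f (u (k + 1), v (k + 1)) ≤ f (u k, v k)) ∧
    (∀ ustar vstar, ustar ∈ U → vstar ∈ V →
      (∃ φ : ℕ → ℕ, StrictMono φ ∧
        Tendsto (fun k => (u (φ k), v (φ k))) atTop (nhds (ustar, vstar))) →
      (∀ u' ∈ U, 0 ≤ fderiv ℝ f (ustar, vstar) (u' - ustar, 0)) ∧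
      (∀ v' ∈ V, 0 ≤ fderiv ℝ f (ustar, vstar) (0, v' - vstar))) := by
  have hfc : Continuous f := hf.continuous
  have part1 : ∀ k, f (u (k + 1), v (k + 1)) ≤ f (u k, v k) := fun k =>
    le_trans (hvstep k (v k) (hvV k)) (hustep k (u k) (huU k))
  refine ⟨part1, ?_⟩
  intro ustar vstar hUs hVs ⟨φ, hφ, hlim⟩
  set a : ℕ → ℝ := fun k => f (u k, v k) with ha_def
  have ha : Antitone a := antitone_nat_of_succ_le part1
  -- a is bounded below
  obtain ⟨m, hmUV, hmin⟩ := (hUc.prod hVc).exists_isMinOn (hUne.prod hVne) hfc.continuousOn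
  have hbdd : BddBelow (Set.range a) := by
    refine ⟨f m, ?_⟩
    rintro x ⟨k, rfl⟩
    exact hmin ⟨huU k, hvV k⟩
  have haL : Tendsto a atTop (nhds (⨅ i, a i)) := tendsto_atTop_ciInf ha hbdd
  set L : ℝ := ⨅ i, a i with hL_def
  have haφ : Tendsto (fun k => a (φ k)) atTop (nhds L) := haL.comp hφ.tendsto_atTop
  have haφ' : Tendsto (fun k => a (φ k)) atTop (nhds (f (ustar, vstar))) :=
    (hfc.tendsto _).comp hlim
  have hLf : L = f (ustar, vstar) := tendsto_nhds_unique haφ haφ'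
  -- v-side minimality: f (ustar, vstar) ≤ f (ustar, v') for v' ∈ V
  have key2 : ∀ v' ∈ V, f (ustar, vstar) ≤ f (ustar, v') := by
    intro v' hv'
    have hlim1 : Tendsto (fun k => (u (φ (k + 1)), v (φ (k + 1)))) atTop
        (nhds (ustar, vstar)) := hlim.comp (tendsto_add_atTop_nat 1)
    have hle : ∀ k, f (u (φ (k + 1)), v (φ (k + 1))) ≤ f (u (φ (k + 1)), v') := by
      intro k
      have hpos : 0 < φ (k + 1) :=
        lt_of_le_of_lt (Nat.zero_le _) (hφ (Nat.succ_pos k))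
      have h1 : φ (k + 1) - 1 + 1 = φ (k + 1) := Nat.succ_pred_eq_of_pos hpos
      rw [← h1]
      exact hvstep (φ (k + 1) - 1) v' hv'
    refine le_of_tendsto_of_tendsto' ((hfc.tendsto _).comp hlim1)
      ((hfc.tendsto _).comp ?_) hle
    exact ((continuous_fst.tendsto _).comp hlim1).prodMk_nhds tendsto_const_nhds
  -- u-side minimality: f (ustar, vstar) ≤ f (u', vstar) for u' ∈ U
  have key1 : ∀ u' ∈ U, f (ustar, vstar) ≤ f (u', vstar) := by
    intro u' hu'
    set w : ℕ → EuclideanSpace ℝ (Fin p) := fun k => u (φ k + 1) with hw_def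
    obtain ⟨ub, hubU, ψ, hψ, hwlim⟩ := hUc.tendsto_subseq (fun k => huU (φ k + 1))
    set b : ℕ → ℝ := fun k => f (w k, v (φ k)) with hb_def
    have hmono : StrictMono fun k => φ k + 1 := fun i j h =>
      Nat.add_lt_add_right (hφ h) 1
    have hb_lb : ∀ k, a (φ k + 1) ≤ b k := fun k => hvstep (φ k) (v (φ k)) (hvV _)
    have hb_ub : ∀ k, b k ≤ a (φ k) := fun k => hustep (φ k) (u (φ k)) (huU _)
    have hbL : Tendsto b atTop (nhds L) :=
      tendsto_of_tendsto_of_tendsto_of_le_of_le (haL.comp hmono.tendsto_atTop)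
        haφ hb_lb hb_ub
    have hvφψ : Tendsto (fun k => v (φ (ψ k))) atTop (nhds vstar) :=
      (continuous_snd.tendsto _).comp (hlim.comp hψ.tendsto_atTop)
    have hbψ : Tendsto (fun k => b (ψ k)) atTop (nhds L) := hbL.comp hψ.tendsto_atTop
    have hbψ' : Tendsto (fun k => b (ψ k)) atTop (nhds (f (ub, vstar))) :=
      (hfc.tendsto _).comp (hwlim.prodMk_nhds hvφψ)
    have hfub : f (ub, vstar) = L := tendsto_nhds_unique hbψ' hbψ
    have hle : ∀ k, b (ψ k) ≤ f (u', v (φ (ψ k))) := fun k =>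
      hustep (φ (ψ k)) u' hu'
    have : f (ub, vstar) ≤ f (u', vstar) :=
      le_of_tendsto_of_tendsto' hbψ'
        ((hfc.tendsto _).comp (tendsto_const_nhds.prodMk_nhds hvφψ)) hle
    rw [hfub, hLf] at this
    exact this
  -- first-order conditions
  have hdf : HasFDerivAt f (fderiv ℝ f (ustar, vstar)) (ustar, vstar) :=
    (hf.differentiable one_ne_zero _).hasFDerivAt
  constructor
  · intro u' hu'
    have hmin : IsMinOn f (U ×ˢ {vstar}) (ustar, vstar) := by
      rintro ⟨z1, z2⟩ ⟨hz1, hz2⟩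
      simp only [Set.mem_singleton_iff] at hz2
      subst hz2
      exact key1 z1 hz1
    have hseg : segment ℝ ((ustar, vstar) : _ × _) (u', vstar) ⊆ U ×ˢ {vstar} := by
      rintro z ⟨t1, t2, ht1, ht2, hsum, rfl⟩
      constructor
      · exact hUconv hUs hu' ht1 ht2 hsum
      · show t1 • vstar + t2 • vstar = vstar
        rw [← add_smul, hsum, one_smul]
    have hcone : ((u', vstar) : _ × _) - (ustar, vstar) ∈
        posTangentConeAt (U ×ˢ {vstar}) (ustar, vstar) :=
      sub_mem_posTangentConeAt_of_segment_subset hseg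
    have := hmin.localize.hasFDerivWithinAt_nonneg hdf.hasFDerivWithinAt hcone
    simpa using this
  · intro v' hv'
    have hmin : IsMinOn f ({ustar} ×ˢ V) (ustar, vstar) := by
      rintro ⟨z1, z2⟩ ⟨hz1, hz2⟩
      simp only [Set.mem_singleton_iff] at hz1
      subst hz1
      exact key2 z2 hz2
    have hseg : segment ℝ ((ustar, vstar) : _ × _) (ustar, v') ⊆ {ustar} ×ˢ V := by
      rintro z ⟨t1, t2, ht1, ht2, hsum, rfl⟩
      constructor
      · show t1 • ustar + t2 • ustar = ustar
        rw [← add_smul, hsum, one_smul]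
      · exact hVconv hVs hv' ht1 ht2 hsum
    have hcone : ((ustar, v') : _ × _) - (ustar, vstar) ∈
        posTangentConeAt ({ustar} ×ˢ V) (ustar, vstar) :=
      sub_mem_posTangentConeAt_of_segment_subset hseg
    have := hmin.localize.hasFDerivWithinAt_nonneg hdf.hasFDerivWithinAt hcone
    simpa using this
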